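/- arXiv:1701.00154 — 6 statements merged into one kernel-verified Lean document; each statement's English description precedes it below -/
import Mathlib

section
/- Let W be a countable type with a level function ℓ : W → ℕ, and suppose there exist constants c > 0 and n ∈ ℕ such that for every m ∈ ℕ the set {w ∈ W : ℓ(w) = m} has at most c·(m+1)^n elements. Let f : W → ℝ≥0. Then the following are equivalent: (1) for every δ with 0 < δ < 1, the sum Σ_{w ∈ W} f(w)·(1−δ)^{ℓ(w)} converges; (2) for every δ > 0, the set {w ∈ W : f(w) > (1+δ)^{ℓ(w)}} is finite. -/
/-- Auxiliary: summability of `r ^ ℓ w` when level sets grow polynomially. -/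
lemma aux_geom_summable {W : Type*} [Countable W] (ℓ : W → ℕ) (c : ℝ) (n : ℕ)
    (hc : 0 < c)
    (hfin : ∀ m : ℕ, {w : W | ℓ w = m}.Finite)
    (hcard : ∀ m : ℕ, (Nat.card {w : W | ℓ w = m} : ℝ) ≤ c * (m + 1) ^ n)
    {r : ℝ} (hr0 : 0 < r) (hr1 : r < 1) :
    Summable fun w : W => r ^ ℓ w := by
  have hrnorm : ‖r‖ < 1 := by rw [Real.norm_eq_abs, abs_of_pos hr0]; exact hr1
  have h1 : Summable fun m : ℕ => (m : ℝ) ^ n * r ^ m :=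
    summable_pow_mul_geometric_of_norm_lt_one n hrnorm
  have h2 : Summable fun m : ℕ => ((m : ℝ) + 1) ^ n * r ^ (m + 1) := by
    have := (summable_nat_add_iff 1).2 h1
    simpa [Nat.cast_add] using this
  have h3 : Summable fun m : ℕ => ((m : ℝ) + 1) ^ n * r ^ m := by
    have := h2.mul_right r⁻¹
    have heq : ∀ m : ℕ, ((m : ℝ) + 1) ^ n * r ^ (m + 1) * r⁻¹
        = ((m : ℝ) + 1) ^ n * r ^ m := by
      intro m
      field_simp [pow_succ]
      ring
    simpa [heq] using this
  set g : ℕ → ℝ := fun m => c * (((m : ℝ) + 1) ^ n * r ^ m) with hg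
  have hgsum : Summable g := h3.mul_left c
  have hgnn : ∀ m, 0 ≤ g m := fun m => by positivity
  apply summable_of_sum_le (c := ∑' m, g m)
  · intro w
    positivity
  · intro u
    have hmap : ∀ w ∈ u, ℓ w ∈ u.image ℓ := fun w hw => Finset.mem_image_of_mem ℓ hw
    rw [← Finset.sum_fiberwise_of_maps_to hmap (fun w => r ^ ℓ w)]
    have hstep : ∀ m ∈ u.image ℓ,
        (∑ w ∈ u.filter (fun w => ℓ w = m), r ^ ℓ w) ≤ g m := by
      intro m _
      have hsum_eq : (∑ w ∈ u.filter (fun w => ℓ w = m), r ^ ℓ w)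
          = (u.filter (fun w => ℓ w = m)).card * r ^ m := by
        rw [Finset.sum_congr rfl (fun w hw => by
          rw [(Finset.mem_filter.1 hw).2])]
        simp [Finset.sum_const, nsmul_eq_mul]
      rw [hsum_eq]
      have hcard_le : ((u.filter (fun w => ℓ w = m)).card : ℝ)
          ≤ (Nat.card {w : W | ℓ w = m} : ℝ) := by
        have : (u.filter (fun w => ℓ w = m)).card ≤ (hfin m).toFinset.card := by
          apply Finset.card_le_card
          intro w hw
          simp only [Set.Finite.mem_toFinset, Set.mem_setOf_eq]
          exact (Finset.mem_filter.1 hw).2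
        have hnc : Nat.card {w : W | ℓ w = m} = (hfin m).toFinset.card := by
          rw [Nat.card_eq_card_finite_toFinset (hfin m)]
        rw [hnc]
        exact_mod_cast this
      calc ((u.filter (fun w => ℓ w = m)).card : ℝ) * r ^ m
          ≤ (c * ((m : ℝ) + 1) ^ n) * r ^ m := by
            apply mul_le_mul_of_nonneg_right (hcard_le.trans (hcard m)) (by positivity)
        _ = g m := by rw [hg]; ring
    calc (∑ m ∈ u.image ℓ, ∑ w ∈ u.filter (fun w => ℓ w = m), r ^ ℓ w)
        ≤ ∑ m ∈ u.image ℓ, g m := Finset.sum_le_sum hstep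
      _ ≤ ∑' m, g m := Summable.sum_le_tsum _ (fun m _ => hgnn m) hgsum

/-- Equivalent temperedness conditions for a nonnegative function on a countable
index set whose level sets (with respect to a length function) grow polynomially. -/
theorem stmt1 {W : Type*} [Countable W] (ℓ : W → ℕ) (c : ℝ) (n : ℕ) (hc : 0 < c)
    (hfin : ∀ m : ℕ, {w : W | ℓ w = m}.Finite)
    (hcard : ∀ m : ℕ, (Nat.card {w : W | ℓ w = m} : ℝ) ≤ c * (m + 1) ^ n)
    (f : W → NNReal) :
    (∀ δ : ℝ, 0 < δ → δ < 1 → Summable fun w : W => (f w : ℝ) * (1 - δ) ^ ℓ w) ↔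
      ∀ δ : ℝ, 0 < δ → {w : W | (1 + δ) ^ ℓ w < (f w : ℝ)}.Finite := by
  constructor
  · intro h δ hδ
    set δ' : ℝ := δ / (2 * (1 + δ)) with hδ'def
    have hδpos : (0:ℝ) < 1 + δ := by linarith
    have hδ'0 : 0 < δ' := by positivity
    have hδ'1 : δ' < 1 := by
      rw [hδ'def, div_lt_one (by positivity)]
      nlinarith
    have hprod : 1 ≤ (1 + δ) * (1 - δ') := by
      have hne : (1 + δ) ≠ 0 := by positivity
      have heq : (1 + δ) * (1 - δ') = 1 + δ / 2 := by
        rw [hδ'def]; field_simp; ring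
      rw [heq]; linarith
    have hsum := h δ' hδ'0 hδ'1
    have htend := hsum.tendsto_cofinite_zero
    have hev : ∀ᶠ w in Filter.cofinite, (f w : ℝ) * (1 - δ') ^ ℓ w < 1 :=
      htend.eventually_lt_const one_pos
    rw [Filter.eventually_cofinite] at hev
    apply hev.subset
    intro w hw
    simp only [Set.mem_setOf_eq] at hw ⊢
    push_neg
    have h1 : ((1 + δ) * (1 - δ')) ^ ℓ w ≤ (f w : ℝ) * (1 - δ') ^ ℓ w := by
      rw [mul_pow]
      apply mul_le_mul_of_nonneg_right hw.le (pow_nonneg (by linarith) _)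
    calc (1:ℝ) = 1 ^ ℓ w := (one_pow _).symm
      _ ≤ ((1 + δ) * (1 - δ')) ^ ℓ w := pow_le_pow_left₀ one_pos.le hprod _
      _ ≤ (f w : ℝ) * (1 - δ') ^ ℓ w := h1
  · intro h δ hδ0 hδ1
    have hS := h (δ / 2) (by linarith)
    set r : ℝ := (1 + δ / 2) * (1 - δ) with hrdef
    have hr0 : 0 < r := by
      apply mul_pos <;> linarith
    have hr1 : r < 1 := by rw [hrdef]; nlinarith
    have hsum_r := aux_geom_summable ℓ c n hc hfin hcard hr0 hr1
    rw [← hS.summable_compl_iff]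
    refine Summable.of_nonneg_of_le (fun w => ?_) (fun w => ?_) (hsum_r.subtype _)
    · simp only [Function.comp_apply]
      exact mul_nonneg (f _).coe_nonneg (pow_nonneg (by linarith) _)
    · obtain ⟨w, hw⟩ := w
      simp only [Set.mem_compl_iff, Set.mem_setOf_eq, not_lt] at hw
      simp only [Function.comp_apply]
      calc (f w : ℝ) * (1 - δ) ^ ℓ w
          ≤ (1 + δ / 2) ^ ℓ w * (1 - δ) ^ ℓ w := by
            apply mul_le_mul_of_nonneg_right hw (pow_nonneg (by linarith) _)
        _ = r ^ ℓ w := by rw [hrdef, mul_pow]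
end

section
/- Let G be a locally compact topological group with a left-invariant Haar measure μ, and let K be a compact open subgroup of G. Then for every g ∈ G one has μ(Kg) · μ(Kg⁻¹K) = μ(K) · μ(KgK), where Kg = {kg : k ∈ K}, KgK = {k₁gk₂ : k₁, k₂ ∈ K}, and Kg⁻¹K = {k₁g⁻¹k₂ : k₁, k₂ ∈ K}. -/
/-!
Put `L = g⁻¹Kg`; then `KgK = g • (L K)` and `K g⁻¹ K g = K L`. For a compact subgroup `M` and an
open subgroup `K`, the left cosets of `K` in `M K` and those of `M ⊓ K` in `M` are both indexed by
the finite set `M / (M ⊓ K)`, so `μ (M K) μ (M ⊓ K) = μ K μ M`. Applied to `(L, K)` and `(K, L)`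
this gives `μ (L K) = μ (K L)`, i.e. `μ (KgK) = μ (K g⁻¹ K g)`; and right translation by `g`
scales both `μ K` and `μ (K g⁻¹ K)` by the same factor, the modular character.
-/

open Pointwise MeasureTheory Measure

lemma Subgroup.coe_mul_coe_of_le {G : Type*} [Group G] {H M : Subgroup G} (h : H ≤ M) :
    (M : Set G) * H = M :=
  (Subgroup.mul_subset subset_rfl h).antisymm (Set.subset_mul_left _ H.one_mem)

lemma Subgroup.injOn_quotientMapOfLE_inf_image_mk {G : Type*} [Group G] (M K : Subgroup G) :
    Set.InjOn (quotientMapOfLE (inf_le_right : M ⊓ K ≤ K)) (QuotientGroup.mk '' (M : Set G)) := by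
  rintro _ ⟨a, ha, rfl⟩ _ ⟨b, hb, rfl⟩ hab
  simp only [quotientMapOfLE_apply_mk, QuotientGroup.eq] at hab ⊢
  exact ⟨M.mul_mem (M.inv_mem ha) hb, hab⟩

lemma measure_preimage_mk_of_finite {G : Type*} [Group G] [MeasurableSpace G] [MeasurableMul G]
    (μ : Measure G) [μ.IsMulLeftInvariant] {K : Subgroup G} (hK : MeasurableSet (K : Set G))
    {T : Set (G ⧸ K)} (hT : T.Finite) :
    μ ((↑) ⁻¹' T : Set G) = T.ncard * μ K := by
  have hfiber (q : G ⧸ K) : (QuotientGroup.mk ⁻¹' {q} : Set G) = q.out • (K : Set G) := by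
    rw [← QuotientGroup.eq_class_eq_leftCoset, QuotientGroup.out_eq']
    rfl
  lift T to Finset (G ⧸ K) using hT
  rw [Set.ncard_coe_finset, ← Finset.set_biUnion_preimage_singleton,
    measure_biUnion_finset (fun q _ q' _ hne => (Set.disjoint_singleton.mpr hne).preimage _)
      (fun q _ => hfiber q ▸ hK.const_smul _)]
  simp [hfiber, measure_smul]

section Topological

variable {G : Type*} [Group G] [TopologicalSpace G] [IsTopologicalGroup G]
  [MeasurableSpace G] [BorelSpace G] (μ : Measure G)

lemma measure_mul_subgroup_mul_measure_inf [μ.IsMulLeftInvariant] {M K : Subgroup G}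
    (hMc : IsCompact (M : Set G)) (hMm : MeasurableSet (M : Set G)) (hK : IsOpen (K : Set G)) :
    μ (M * K) * μ (M ⊓ K : Subgroup G) = μ K * μ M := by
  set φ := Subgroup.quotientMapOfLE (inf_le_right : M ⊓ K ≤ K)
  set T : Set (G ⧸ M ⊓ K) := QuotientGroup.mk '' (M : Set G)
  have hinj : T.InjOn φ := Subgroup.injOn_quotientMapOfLE_inf_image_mk M K
  have hφT : φ '' T = QuotientGroup.mk '' (M : Set G) := by
    simp [T, φ, Set.image_image, Subgroup.quotientMapOfLE_apply_mk]
  have hφTfin : (φ '' T).Finite :=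
    have := QuotientGroup.discreteTopology hK
    hφT ▸ (hMc.image QuotientGroup.continuous_mk).finite_of_discrete
  have hM : μ M = T.ncard * μ (M ⊓ K : Subgroup G) := by
    rw [← measure_preimage_mk_of_finite μ (hMm.inter hK.measurableSet)
      (hφTfin.of_finite_image hinj), QuotientGroup.preimage_image_mk_eq_mul,
      Subgroup.coe_mul_coe_of_le inf_le_left]
  have hMK : μ (M * K) = T.ncard * μ K := by
    rw [← hinj.ncard_image, ← measure_preimage_mk_of_finite μ hK.measurableSet hφTfin, hφT,
      QuotientGroup.preimage_image_mk_eq_mul]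
  rw [hM, hMK]
  ring

lemma measure_mul_singleton [LocallyCompactSpace G] [μ.IsHaarMeasure] {A : Set G}
    (hA : IsCompact A) (g : G) :
    μ (A * {g}) = modularCharacterFun g⁻¹ • μ A := by
  have h : A * {g} = MeasurableEquiv.mulRight g⁻¹ ⁻¹' A := by
    ext x
    simp
  rw [h, ← MeasurableEquiv.map_apply, modularCharacterFun_eq_haarScalarFactor μ]
  exact measure_isMulInvariant_eq_smul_of_isCompact_closure (map (· * g⁻¹) μ) μ hA.closure

end Topological

/-- For a compact open subgroup `K` of a locally compact group with left Haar
measure `μ`, one has `μ(Kg) * μ(Kg⁻¹K) = μ(K) * μ(KgK)` for every `g`. -/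
theorem stmt5 {G : Type*} [Group G] [TopologicalSpace G] [IsTopologicalGroup G]
    [LocallyCompactSpace G] [MeasurableSpace G] [BorelSpace G]
    (μ : Measure G) [μ.IsHaarMeasure]
    (K : Subgroup G) (hKcomp : IsCompact (K : Set G)) (hKopen : IsOpen (K : Set G))
    (g : G) :
    μ ((K : Set G) * {g}) * μ ((K : Set G) * {g⁻¹} * (K : Set G)) =
      μ (K : Set G) * μ ((K : Set G) * {g} * (K : Set G)) := by
  set L := K.comap (MulAut.conj g).toMonoidHom
  have hL : (L : Set G) = g⁻¹ • ((K : Set G) * {g}) := by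
    ext x
    simp [L, Set.mem_smul_set_iff_inv_smul_mem]
  have hLcomp : IsCompact (L : Set G) := hL ▸ (hKcomp.mul isCompact_singleton).smul _
  have hLopen : IsOpen (L : Set G) := hL ▸ hKopen.mul_right.smul _
  have hKgK : (K : Set G) * {g} * K = g • (L * K) := by
    rw [← smul_mul_assoc, hL, smul_inv_smul]
  have hKL : (K : Set G) * L = K * {g⁻¹} * K * {g} := by
    rw [hL, ← Set.singleton_smul, smul_eq_mul]
    simp only [mul_assoc]
  have hH0 : μ (L ⊓ K : Subgroup G) ≠ 0 :=
    (hLopen.inter hKopen).measure_ne_zero μ ⟨1, L.one_mem, K.one_mem⟩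
  have hHtop : μ (L ⊓ K : Subgroup G) ≠ ⊤ :=
    ne_top_of_le_ne_top hKcomp.measure_ne_top (measure_mono Set.inter_subset_right)
  refine (ENNReal.mul_left_inj hH0 hHtop).mp ?_
  calc μ (K * {g}) * μ (K * {g⁻¹} * K) * μ (L ⊓ K : Subgroup G)
      = μ K * (μ (K * L) * μ (K ⊓ L : Subgroup G)) := by
        rw [hKL, measure_mul_singleton μ hKcomp, inf_comm,
          measure_mul_singleton μ ((hKcomp.mul isCompact_singleton).mul hKcomp)]
        simp only [ENNReal.smul_def]
        ring
    _ = μ K * (μ (L * K) * μ (L ⊓ K : Subgroup G)) := by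
        rw [measure_mul_subgroup_mul_measure_inf μ hKcomp hKopen.measurableSet hLopen,
          measure_mul_subgroup_mul_measure_inf μ hLcomp hLopen.measurableSet hKopen, mul_comm (μ L)]
    _ = μ K * μ (K * {g} * K) * μ (L ⊓ K : Subgroup G) := by
        rw [hKgK, measure_smul, mul_assoc]
end

section
/- Let G be a locally compact second countable topological group with a left-invariant Haar measure μ, and let K be a compact open subgroup of G. If μ(KgK) = μ(Kg⁻¹K) for every g ∈ G, then μ is also right-invariant; that is, G is unimodular. -/
/-!
Let `Δ` be the modular character, so that `μ (A * {g}) = Δ g⁻¹ * μ A`. Being trivial on the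
compact open subgroup `K`, `Δ` is constant, equal to `Δ g`, on the double coset `D = KgK`.
As `D * K = D`, it is a countable disjoint union of left cosets `aK`, each of measure `μ K`, so
`D⁻¹ = Kg⁻¹K` is the disjoint union of the right cosets `Ka⁻¹`, each of measure
`Δ a * μ K = Δ g * μ K`. Hence `μ (Kg⁻¹K) = Δ g * μ (KgK)`, and as `0 < μ (KgK) < ∞` the
hypothesis forces `Δ g = 1`.
-/

open Pointwise MeasureTheory
open scoped NNReal ENNReal

namespace MeasureTheory.Measure

open MulOpposite

variable {G : Type*} [Group G] [TopologicalSpace G] [IsTopologicalGroup G] [LocallyCompactSpace G]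
  [SecondCountableTopology G] [MeasurableSpace G] [BorelSpace G]

lemma map_mul_right_eq_modularCharacter_smul (μ : Measure G) [μ.IsHaarMeasure] (g : G) :
    map (· * g) μ = modularCharacter g • μ := by
  rw [modularCharacter, MonoidHom.coe_mk, OneHom.coe_mk, modularCharacterFun_eq_haarScalarFactor μ]
  exact isMulLeftInvariant_eq_smul _ μ

lemma measure_op_smul_eq_modularCharacter_mul (μ : Measure G) [μ.IsHaarMeasure] (g : G)
    (A : Set G) : μ (op g • A) = modularCharacter g⁻¹ * μ A := by
  have : op g • A = (· * g⁻¹) ⁻¹' A := by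
    rw [← Set.preimage_smul_inv]; rfl
  rw [this, ← (measurableEmbedding_mulRight g⁻¹).map_apply,
    map_mul_right_eq_modularCharacter_smul]
  rfl

lemma modularCharacter_eq_one_of_mem {K : Subgroup G} (hKcomp : IsCompact (K : Set G))
    (hKopen : IsOpen (K : Set G)) {k : G} (hk : k ∈ K) : modularCharacter k = 1 := by
  have h := measure_op_smul_eq_modularCharacter_mul haar k⁻¹ (K : Set G)
  rw [op_smul_coe_set (K.inv_mem hk), inv_inv, eq_comm,
    ENNReal.mul_eq_right (hKopen.measure_ne_zero haar ⟨1, K.one_mem⟩)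
      hKcomp.measure_lt_top.ne] at h
  exact_mod_cast h

lemma modularCharacter_eq_of_mem_doubleCoset {K : Subgroup G} (hKcomp : IsCompact (K : Set G))
    (hKopen : IsOpen (K : Set G)) {g x : G} (hx : x ∈ (K : Set G) * {g} * (K : Set G)) :
    modularCharacter x = modularCharacter g := by
  obtain ⟨_, ⟨k₁, hk₁, _, rfl, rfl⟩, k₂, hk₂, rfl⟩ := hx
  simp [modularCharacter_eq_one_of_mem hKcomp hKopen hk₁,
    modularCharacter_eq_one_of_mem hKcomp hKopen hk₂]

lemma measure_inv_eq_mul_of_mul_subgroup_eq (μ : Measure G) [μ.IsHaarMeasure] {K : Subgroup G}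
    (hKopen : IsOpen (K : Set G)) {A : Set G} (hA : A * K = A) {c : ℝ≥0}
    (hc : ∀ a ∈ A, modularCharacter a = c) : μ A⁻¹ = c * μ A := by
  have : DiscreteTopology (G ⧸ K) := QuotientGroup.discreteTopology hKopen
  have : Countable (G ⧸ K) := TopologicalSpace.separableSpace_iff_countable.mp inferInstance
  set S : Set (G ⧸ K) := QuotientGroup.mk '' A
  have hfiber (a : G) : QuotientGroup.mk ⁻¹' {(a : G ⧸ K)} = a • (K : Set G) := by
    rw [← Set.image_singleton, QuotientGroup.preimage_image_mk_eq_mul, Set.singleton_mul]; rfl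
  have hA_sat : QuotientGroup.mk ⁻¹' S = A := by rw [QuotientGroup.preimage_image_mk_eq_mul, hA]
  have hAinv_sat : ((QuotientGroup.mk : G → G ⧸ K) ∘ Inv.inv) ⁻¹' S = A⁻¹ := by
    rw [Set.preimage_comp, hA_sat, Set.inv_preimage]
  have hmk : Continuous (QuotientGroup.mk : G → G ⧸ K) := continuous_quot_mk
  have hfiber_meas (f : G → G ⧸ K) (hf : Continuous f) (b : G ⧸ K) : MeasurableSet (f ⁻¹' {b}) :=
    ((isOpen_discrete _).preimage hf).measurableSet
  have hμA : μ A = ∑' _ : S, μ K := by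
    rw [← hA_sat, ← tsum_measure_preimage_singleton S.to_countable (fun b _ ↦ hfiber_meas _ hmk b)]
    refine tsum_congr fun ⟨_, a, _, rfl⟩ ↦ ?_
    rw [hfiber, measure_smul]
  have hμAinv : μ A⁻¹ = ∑' _ : S, c * μ K := by
    rw [← hAinv_sat, ← tsum_measure_preimage_singleton S.to_countable
      (fun b _ ↦ hfiber_meas _ (hmk.comp continuous_inv) b)]
    refine tsum_congr fun ⟨_, a, ha, rfl⟩ ↦ ?_
    rw [Set.preimage_comp, Set.inv_preimage, hfiber, Set.inv_smul_set_distrib, inv_coe_set,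
      measure_op_smul_eq_modularCharacter_mul, inv_inv, hc a ha]
  rw [hμAinv, ENNReal.tsum_mul_left, hμA]

lemma measure_inv_doubleCoset (μ : Measure G) [μ.IsHaarMeasure] {K : Subgroup G}
    (hKcomp : IsCompact (K : Set G)) (hKopen : IsOpen (K : Set G)) (g : G) :
    μ ((K : Set G) * {g⁻¹} * (K : Set G)) =
      modularCharacter g * μ ((K : Set G) * {g} * (K : Set G)) := by
  have hD_inv : ((K : Set G) * {g} * (K : Set G))⁻¹ = (K : Set G) * {g⁻¹} * (K : Set G) := by
    rw [mul_inv_rev, mul_inv_rev, inv_coe_set, Set.inv_singleton, mul_assoc]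
  rw [← hD_inv]
  exact measure_inv_eq_mul_of_mul_subgroup_eq μ hKopen (by rw [mul_assoc, coe_mul_coe])
    fun _ hx ↦ modularCharacter_eq_of_mem_doubleCoset hKcomp hKopen hx

end MeasureTheory.Measure

open MeasureTheory.Measure in
/-- If the double cosets `KgK` and `Kg⁻¹K` of a compact open subgroup `K` always
have equal left Haar measure, then the group is unimodular. -/
theorem stmt6 {G : Type*} [Group G] [TopologicalSpace G] [IsTopologicalGroup G]
    [LocallyCompactSpace G] [SecondCountableTopology G] [MeasurableSpace G] [BorelSpace G]
    (μ : Measure G) [μ.IsHaarMeasure]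
    (K : Subgroup G) (hKcomp : IsCompact (K : Set G)) (hKopen : IsOpen (K : Set G))
    (h : ∀ g : G,
      μ ((K : Set G) * {g} * (K : Set G)) = μ ((K : Set G) * {g⁻¹} * (K : Set G))) :
    μ.IsMulRightInvariant := by
  have hΔ (g : G) : modularCharacter g = 1 := by
    have hD_ne_zero : μ ((K : Set G) * {g} * (K : Set G)) ≠ 0 := hKopen.mul_left.measure_ne_zero μ
      ⟨1 * g * 1, Set.mul_mem_mul (Set.mul_mem_mul K.one_mem rfl) K.one_mem⟩
    have hD_ne_top : μ ((K : Set G) * {g} * (K : Set G)) ≠ ⊤ :=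
      ((hKcomp.mul isCompact_singleton).mul hKcomp).measure_lt_top.ne
    have hμ := measure_inv_doubleCoset μ hKcomp hKopen g
    rw [← h g, eq_comm, ENNReal.mul_eq_right hD_ne_zero hD_ne_top] at hμ
    exact_mod_cast hμ
  refine ⟨fun g ↦ ?_⟩
  rw [map_mul_right_eq_modularCharacter_smul, hΔ, one_smul]
end

section
/- Let S be a countable type with a level function ℓ : S → ℕ, and suppose there is a real number r ≥ 1 such that for every m ∈ ℕ the set {x ∈ S : ℓ(x) = m} has at most r^m elements. Let 1 ≤ p < ∞ and let f : S → ℂ satisfy Σ_{x ∈ S} |f(x)|^{p+ε} < ∞ for every ε > 0. Then for every δ with 0 < δ < 1, Σ_{x ∈ S} |f(x)|^p·(1−δ)^{p·ℓ(x)} < ∞; that is, the function f_δ(x) = (1−δ)^{ℓ(x)}·f(x) lies in ℓ^p(S) for every δ ∈ (0,1). -/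
/-! By Young's inequality with exponents `q = N/(N-1)` and `N`,
`|f x|^p c^{ℓ x} ≤ |f x|^{p q} + (c^N)^{ℓ x}` where `c = (1-δ)^p < 1`. The first term is
summable since `p q > p`; the second because the level sets have at most `r^m` elements, so
that its sum is dominated by the geometric series `∑ (r c^N)^m`, which converges once `N` is
large. -/

section Levels

variable {S : Type*} (ℓ : S → ℕ) (r : ℝ)

theorem summable_comp_of_card_level_le (hfin : ∀ m : ℕ, {x : S | ℓ x = m}.Finite)
    (hcard : ∀ m : ℕ, (Nat.card {x : S | ℓ x = m} : ℝ) ≤ r ^ m)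
    {g : ℕ → ℝ} (hg : 0 ≤ g) (hsum : Summable fun m => r ^ m * g m) :
    Summable fun x => g (ℓ x) := by
  refine (summable_partition (fun x => hg (ℓ x)) (s := fun m => {x | ℓ x = m})
    fun x => ⟨ℓ x, rfl, fun m hm => hm.symm⟩).2 ⟨fun m => ?_, ?_⟩
  · have := (hfin m).to_subtype
    exact .of_finite
  · refine hsum.of_nonneg_of_le (fun m => tsum_nonneg fun x => hg _) fun m => ?_
    calc ∑' x : {x : S | ℓ x = m}, g (ℓ x) = ∑' _ : {x : S | ℓ x = m}, g m :=
          tsum_congr fun x => congrArg g x.2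
      _ = Nat.card {x : S | ℓ x = m} * g m := by
        simp only [tsum_const, Nat.card_coe_set_eq, nsmul_eq_mul]
      _ ≤ r ^ m * g m := mul_le_mul_of_nonneg_right (hcard m) (hg m)

theorem summable_pow_comp_of_card_level_le (hfin : ∀ m : ℕ, {x : S | ℓ x = m}.Finite)
    (hcard : ∀ m : ℕ, (Nat.card {x : S | ℓ x = m} : ℝ) ≤ r ^ m)
    {u : ℝ} (hu : 0 ≤ u) (hru : r * u < 1) :
    Summable fun x => u ^ ℓ x := by
  have hr : 0 ≤ r := by simpa using (Nat.cast_nonneg _).trans (hcard 1)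
  refine summable_comp_of_card_level_le ℓ r hfin hcard (g := (u ^ ·)) (pow_nonneg hu) ?_
  simpa only [mul_pow] using summable_geometric_of_lt_one (mul_nonneg hr hu) hru

end Levels

theorem mul_le_rpow_add_rpow {a b q q' : ℝ} (ha : 0 ≤ a) (hb : 0 ≤ b)
    (hqq' : q.HolderConjugate q') : a * b ≤ a ^ q + b ^ q' :=
  calc a * b ≤ a ^ q / q + b ^ q' / q' := Real.young_inequality_of_nonneg ha hb hqq'
    _ ≤ a ^ q + b ^ q' := add_le_add
        (div_le_self (Real.rpow_nonneg ha q) hqq'.lt.le)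
        (div_le_self (Real.rpow_nonneg hb q') hqq'.symm.lt.le)

theorem stmt10_general {S : Type*} (ℓ : S → ℕ) (r : ℝ)
    (hfin : ∀ m : ℕ, {x : S | ℓ x = m}.Finite)
    (hcard : ∀ m : ℕ, (Nat.card {x : S | ℓ x = m} : ℝ) ≤ r ^ m)
    (p : ℝ) (hp : 1 ≤ p) (f : S → ℂ)
    (hf : ∀ ε : ℝ, 0 < ε → Summable fun x : S => ‖f x‖ ^ (p + ε)) :
    ∀ δ : ℝ, 0 < δ → δ < 1 →
      Summable fun x : S => ‖f x‖ ^ p * (1 - δ) ^ (p * (ℓ x : ℝ)) := by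
  intro δ hδ0 hδ1
  set c := (1 - δ) ^ p
  have hc0 : 0 ≤ c := Real.rpow_nonneg (by linarith) p
  have hc1 : c < 1 := Real.rpow_lt_one (by linarith) (by linarith) (by linarith)
  obtain ⟨N, hrN, hN⟩ : ∃ N : ℕ, r * c ^ N < 1 ∧ 2 ≤ N :=
    (((tendsto_pow_atTop_nhds_zero_of_lt_one hc0 hc1).const_mul r).eventually
      (gt_mem_nhds (by simp))).and (Filter.eventually_ge_atTop 2) |>.exists
  set q := Real.conjExponent N
  have hqN : q.HolderConjugate N := (Real.HolderConjugate.conjExponent (by exact_mod_cast hN)).symm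
  have hε : 0 < p * q - p := by nlinarith [hqN.lt]
  refine .of_nonneg_of_le (fun x => by positivity) (fun x => ?_)
    ((hf _ hε).add (summable_pow_comp_of_card_level_le ℓ r hfin hcard (pow_nonneg hc0 N) hrN))
  calc ‖f x‖ ^ p * (1 - δ) ^ (p * (ℓ x : ℝ)) = ‖f x‖ ^ p * c ^ ℓ x := by
        rw [Real.rpow_mul (by linarith), Real.rpow_natCast]
    _ ≤ (‖f x‖ ^ p) ^ q + (c ^ ℓ x) ^ (N : ℝ) :=
        mul_le_rpow_add_rpow (by positivity) (by positivity) hqN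
    _ = ‖f x‖ ^ (p + (p * q - p)) + (c ^ N) ^ ℓ x := by
        rw [add_sub_cancel, ← Real.rpow_mul (norm_nonneg _), Real.rpow_natCast, ← pow_mul,
          ← pow_mul, mul_comm N]

/-- On a countable index set with at most exponentially growing level sets,
a function lying in `ℓ^{p+ε}` for every `ε > 0` is `p`-tempered. -/
theorem stmt10 {S : Type*} [Countable S] (ℓ : S → ℕ) (r : ℝ) (hr : 1 ≤ r)
    (hfin : ∀ m : ℕ, {x : S | ℓ x = m}.Finite)
    (hcard : ∀ m : ℕ, (Nat.card {x : S | ℓ x = m} : ℝ) ≤ r ^ m)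
    (p : ℝ) (hp : 1 ≤ p) (f : S → ℂ)
    (hf : ∀ ε : ℝ, 0 < ε → Summable fun x : S => ‖f x‖ ^ (p + ε)) :
    ∀ δ : ℝ, 0 < δ → δ < 1 →
      Summable fun x : S => ‖f x‖ ^ p * (1 - δ) ^ (p * (ℓ x : ℝ)) :=
  stmt10_general ℓ r hfin hcard p hp f hf
end

section
/- Let G be a locally compact topological group with a left-invariant Haar measure μ, and let A₀ ⊆ G be a nonempty open subset with compact closure that generates G, i.e. G = ⋃_{n≥1} A₀ⁿ. Define the word length ℓ(g) = min{n ≥ 1 : g ∈ A₀ⁿ}. Let 1 ≤ p < ∞ and let f : G → ℂ be measurable with ∫_G |f|^{p+ε} dμ < ∞ for every ε > 0. Then for every δ with 0 < δ < 1, ∫_G |f(g)|^p·(1−δ)^{ℓ(g)} dμ(g) < ∞. -/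
open Pointwise MeasureTheory
open scoped ENNReal NNReal

/-!
Covering the compact set `K = closure A₀` by finitely many, say `m`, translates of `A₀` gives
`μ (A₀ ^ (n + 1)) ≤ mⁿ μ K`, so `∫ r ^ ℓ dμ < ∞` as soon as `r m < 1`. Young's inequality with
the conjugate exponents `(N + 1) / N` and `N + 1` gives
`|f|ᵖ (1 - δ)^ℓ ≤ |f| ^ (p + p / N) + ((1 - δ) ^ (N + 1)) ^ ℓ`, and `N` is chosen so large
that `(1 - δ) ^ (N + 1) m < 1`.
-/

namespace ENNReal

theorem rpow_mul_le_rpow_add_pow (x y : ℝ≥0∞) {p : ℝ} (hp : 0 < p) {N : ℕ} (hN : N ≠ 0) :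
    x ^ p * y ≤ x ^ (p + p / N) + y ^ (N + 1) := by
  have hN' : (0 : ℝ) < N := by positivity
  have hconj : ((N : ℝ) + 1).HolderConjugate (((N : ℝ) + 1) / N) :=
    (Real.holderConjugate_iff_eq_conjExponent (by linarith)).2 (by ring_nf)
  have div_le : ∀ (a : ℝ≥0∞) {q : ℝ}, 1 ≤ q → a / ENNReal.ofReal q ≤ a := fun a q hq =>
    ENNReal.div_le_of_le_mul (le_mul_of_one_le_right' (by simpa using hq))
  calc x ^ p * y = y * x ^ p := mul_comm _ _
    _ ≤ y ^ ((N : ℝ) + 1) / ENNReal.ofReal ((N : ℝ) + 1)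
        + (x ^ p) ^ (((N : ℝ) + 1) / N) / ENNReal.ofReal (((N : ℝ) + 1) / N) :=
      young_inequality _ _ hconj
    _ ≤ y ^ ((N : ℝ) + 1) + (x ^ p) ^ (((N : ℝ) + 1) / N) :=
      add_le_add (div_le _ (by linarith)) (div_le _ ((one_le_div hN').2 (by linarith)))
    _ = x ^ (p + p / N) + y ^ (N + 1) := by
      rw [add_comm, ← rpow_mul, ← Nat.cast_add_one, rpow_natCast]
      congr 2
      push_cast
      field_simp

theorem eventually_pow_mul_lt_one {b : ℝ≥0∞} (hb : b < 1) {m : ℝ≥0∞} (hm : m ≠ ⊤) :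
    ∀ᶠ n in Filter.atTop, b ^ n * m < 1 := by
  have hlim := ENNReal.Tendsto.mul_const (tendsto_pow_atTop_nhds_zero_of_lt_one hb) (.inr hm)
  rw [zero_mul] at hlim
  exact hlim.eventually_lt_const zero_lt_one

end ENNReal

theorem lintegral_tsum_indicator_pow_lt_top {X : Type*} [MeasurableSpace X] {μ : Measure X}
    {s : ℕ → Set X} (hs : ∀ n, MeasurableSet (s n)) {r m C : ℝ≥0∞} (hr : r ≠ ⊤) (hC : C ≠ ⊤)
    (hrm : r * m < 1) (hμs : ∀ n, μ (s n) ≤ m ^ n * C) :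
    ∫⁻ x, ∑' n, (s n).indicator (fun _ ↦ r ^ (n + 1)) x ∂μ < ⊤ := by
  rw [lintegral_tsum fun n ↦ (measurable_const.indicator (hs n)).aemeasurable]
  simp_rw [lintegral_indicator_const (hs _)]
  calc ∑' n, r ^ (n + 1) * μ (s n) ≤ ∑' n, (r * m) ^ n * (r * C) :=
        ENNReal.tsum_le_tsum fun n ↦ by
          calc r ^ (n + 1) * μ (s n) ≤ r ^ (n + 1) * (m ^ n * C) := by gcongr; exact hμs n
            _ = (r * m) ^ n * (r * C) := by ring
    _ = (1 - r * m)⁻¹ * (r * C) := by rw [ENNReal.tsum_mul_right, ENNReal.tsum_geometric]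
    _ < ⊤ := ENNReal.mul_lt_top (ENNReal.inv_lt_top.2 (tsub_pos_of_lt hrm))
      (ENNReal.mul_lt_top hr.lt_top hC.lt_top)

theorem IsCompact.exists_finset_subset_iUnion_smul {G : Type*} [Group G] [TopologicalSpace G]
    [IsTopologicalGroup G] {K U : Set G} (hK : IsCompact K) (hU : IsOpen U) (hne : U.Nonempty) :
    ∃ t : Finset G, K ⊆ ⋃ g ∈ t, g • U := by
  obtain ⟨a, ha⟩ := hne
  exact hK.elim_finite_subcover (fun g : G ↦ g • U) (fun g ↦ hU.smul g)
    fun x _ ↦ Set.mem_iUnion.2 ⟨x * a⁻¹, a, ha, by simp⟩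

section Growth

variable {G : Type*} [Group G] [MeasurableSpace G] (μ : Measure G) [μ.IsMulLeftInvariant]

theorem measure_pow_succ_le_card_pow_mul {K : Set G} {t : Finset G}
    (hKt : K * K ⊆ ⋃ g ∈ t, g • K) (n : ℕ) : μ (K ^ (n + 1)) ≤ (t.card : ℝ≥0∞) ^ n * μ K := by
  induction n with
  | zero => simp
  | succ n ih =>
    have hcover : K ^ (n + 2) ⊆ ⋃ g ∈ t, g • K ^ (n + 1) := by
      rw [pow_succ' K (n + 1), pow_succ' K n, ← mul_assoc]
      refine (Set.mul_subset_mul_right hKt).trans ?_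
      rw [Set.iUnion₂_mul]
      exact Set.iUnion₂_mono fun g _ ↦ (smul_mul_assoc g K _).le
    calc μ (K ^ (n + 2)) ≤ ∑ g ∈ t, μ (g • K ^ (n + 1)) :=
          (measure_mono hcover).trans (measure_biUnion_finset_le t _)
      _ = t.card * μ (K ^ (n + 1)) := by simp [measure_smul]
      _ ≤ t.card * ((t.card : ℝ≥0∞) ^ n * μ K) := by gcongr
      _ = (t.card : ℝ≥0∞) ^ (n + 1) * μ K := by ring

variable [TopologicalSpace G] [IsTopologicalGroup G]

theorem exists_measure_pow_succ_le {U : Set G} (hU : IsOpen U) (hne : U.Nonempty)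
    (hcomp : IsCompact (closure U)) :
    ∃ m : ℕ, ∀ n, μ (U ^ (n + 1)) ≤ (m : ℝ≥0∞) ^ n * μ (closure U) := by
  obtain ⟨t, ht⟩ := (hcomp.mul hcomp).exists_finset_subset_iUnion_smul hU hne
  have hKt : closure U * closure U ⊆ ⋃ g ∈ t, g • closure U :=
    ht.trans (Set.iUnion₂_mono fun g _ ↦ Set.smul_set_mono subset_closure)
  exact ⟨t.card, fun n ↦ (measure_mono (Set.pow_subset_pow_left subset_closure)).trans
    (measure_pow_succ_le_card_pow_mul μ hKt n)⟩

end Growth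

noncomputable def wordLength {G : Type*} [Monoid G] (A : Set G) (g : G) : ℕ :=
  sInf {n : ℕ | 1 ≤ n ∧ g ∈ A ^ n}

theorem pow_wordLength_le_tsum_indicator {G : Type*} [Monoid G] {A : Set G} {g : G}
    (hg : ∃ n, 1 ≤ n ∧ g ∈ A ^ n) (r : ℝ≥0∞) :
    r ^ wordLength A g ≤ ∑' n, (A ^ (n + 1)).indicator (fun _ ↦ r ^ (n + 1)) g := by
  obtain ⟨hpos, hmem⟩ : 1 ≤ wordLength A g ∧ g ∈ A ^ wordLength A g := Nat.sInf_mem hg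
  obtain ⟨k, hk⟩ := Nat.exists_eq_add_of_le' hpos
  rw [hk] at hmem ⊢
  exact (Set.indicator_of_mem hmem (fun _ ↦ r ^ (k + 1))).symm.le.trans (ENNReal.le_tsum k)

theorem stmt11_general {G : Type*} [Group G] [TopologicalSpace G] [IsTopologicalGroup G]
    [MeasurableSpace G] [BorelSpace G]
    (μ : Measure G) [μ.IsHaarMeasure]
    (A₀ : Set G) (hopen : IsOpen A₀)
    (hcomp : IsCompact (closure A₀))
    (hgen : ∀ g : G, ∃ n : ℕ, 1 ≤ n ∧ g ∈ A₀ ^ n)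
    (p : ℝ) (hp : 1 ≤ p) (f : G → ℂ)
    (hf : ∀ ε : ℝ, 0 < ε → ∫⁻ g, (‖f g‖₊ : ℝ≥0∞) ^ (p + ε) ∂μ < ⊤) :
    ∀ δ : ℝ, 0 < δ → δ < 1 →
      ∫⁻ g, (‖f g‖₊ : ℝ≥0∞) ^ p *
          ENNReal.ofReal (1 - δ) ^ sInf {n : ℕ | 1 ≤ n ∧ g ∈ A₀ ^ n} ∂μ < ⊤ := by
  intro δ hδ0 _
  set b := ENNReal.ofReal (1 - δ)
  have hne : A₀.Nonempty := by
    obtain ⟨n, hn, h1⟩ := hgen 1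
    exact Set.nonempty_iff_ne_empty.2 fun h ↦ by
      simp [h, Set.empty_pow (n := n) (by omega)] at h1
  obtain ⟨m, hm⟩ := exists_measure_pow_succ_le μ hopen hne hcomp
  obtain ⟨N, hN, hNm⟩ := ((Filter.eventually_ne_atTop 0).and <|
    (Filter.tendsto_add_atTop_nat 1).eventually <| ENNReal.eventually_pow_mul_lt_one (b := b)
      (ENNReal.ofReal_lt_one.2 (by linarith)) (ENNReal.natCast_ne_top m)).exists
  set S := fun g ↦ ∑' n, (A₀ ^ (n + 1)).indicator (fun _ ↦ (b ^ (N + 1)) ^ (n + 1)) g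
  have hpow_open : ∀ n, IsOpen (A₀ ^ (n + 1)) := fun n ↦ by rw [pow_succ']; exact hopen.mul_right
  calc ∫⁻ g, (‖f g‖₊ : ℝ≥0∞) ^ p * b ^ wordLength A₀ g ∂μ
      ≤ ∫⁻ g, (‖f g‖₊ : ℝ≥0∞) ^ (p + p / N) + S g ∂μ := lintegral_mono fun g ↦
        (ENNReal.rpow_mul_le_rpow_add_pow _ _ (by linarith) hN).trans <| by
          rw [← pow_mul, mul_comm, pow_mul]
          exact add_le_add_right (pow_wordLength_le_tsum_indicator (hgen g) _) _
    _ = ∫⁻ g, (‖f g‖₊ : ℝ≥0∞) ^ (p + p / N) ∂μ + ∫⁻ g, S g ∂μ :=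
        lintegral_add_right _ (Measurable.tsum fun n ↦
          measurable_const.indicator (hpow_open n).measurableSet)
    _ < ⊤ := ENNReal.add_lt_top.2 ⟨hf _ (by positivity), lintegral_tsum_indicator_pow_lt_top
        (fun n ↦ (hpow_open n).measurableSet) (ENNReal.pow_ne_top ENNReal.ofReal_ne_top)
        hcomp.measure_lt_top.ne hNm hm⟩

/-- On a compactly generated locally compact group, a measurable function lying
in `L^{p+ε}` for every `ε > 0` is `p`-tempered with respect to the word length
of an open relatively compact generating set. -/
theorem stmt11 {G : Type*} [Group G] [TopologicalSpace G] [IsTopologicalGroup G]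
    [LocallyCompactSpace G] [MeasurableSpace G] [BorelSpace G]
    (μ : Measure G) [μ.IsHaarMeasure]
    (A₀ : Set G) (hne : A₀.Nonempty) (hopen : IsOpen A₀)
    (hcomp : IsCompact (closure A₀))
    (hgen : ∀ g : G, ∃ n : ℕ, 1 ≤ n ∧ g ∈ A₀ ^ n)
    (p : ℝ) (hp : 1 ≤ p) (f : G → ℂ) (hmeas : Measurable f)
    (hf : ∀ ε : ℝ, 0 < ε → ∫⁻ g, (‖f g‖₊ : ℝ≥0∞) ^ (p + ε) ∂μ < ⊤) :
    ∀ δ : ℝ, 0 < δ → δ < 1 →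
      ∫⁻ g, (‖f g‖₊ : ℝ≥0∞) ^ p *
          ENNReal.ofReal (1 - δ) ^ sInf {n : ℕ | 1 ≤ n ∧ g ∈ A₀ ^ n} ∂μ < ⊤ :=
  stmt11_general μ A₀ hopen hcomp hgen p hp f hf
end

section
/- Let S be a countable type with a level function ℓ : S → ℕ, let 1 ≤ p < ∞, let L ∈ ℕ, and let K : S × S → ℂ be a kernel with each row {y : K(x,y) ≠ 0} finite and K(x,y) = 0 whenever |ℓ(x) − ℓ(y)| > L, inducing the operator (Tf)(x) = Σ_y K(x,y)·f(y). Suppose (a) there exists M > 0 such that ‖(|T|(|g|))_δ‖_p ≤ M·‖g_δ‖_p for every g : S → ℂ and every δ ∈ (0,1/2), where g_δ(x) = (1−δ)^{ℓ(x)}g(x) and |T| has kernel |K(x,y)|, and (b) T maps ℓ^p(S) boundedly into itself. If f : S → ℂ is nonzero, satisfies f_δ ∈ ℓ^p(S) for every δ ∈ (0,1), and Tf = λ·f pointwise for some λ ∈ ℂ, then λ lies in the approximate point spectrum of T acting on ℓ^p(S): for every ε > 0 there exists a nonzero g ∈ ℓ^p(S) with ‖Tg − λg‖_p ≤ ε·‖g‖_p.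 -/
/-!
Take `g = f_δ`. Since `K` only couples levels at distance at most `L`,
`(Tg - λg)(x) = ∑_y K(x,y) f(y) ((1-δ)^ℓ(y) - (1-δ)^ℓ(x))`, and the bracket is at most
`c_δ (1-δ)^ℓ(x)` with `c_δ = (1-δ)^(-L) - 1`. Hence `‖Tg - λg‖_p ≤ c_δ ‖(|T||f|)_δ‖_p ≤ c_δ M ‖g‖_p`
by (a), and `c_δ → 0` as `δ → 0`. The bound (b) is only needed to know that the columns
`K(·,y)` lie in `ℓ^p`.
-/

open Filter Topology

lemma abs_pow_sub_pow_le_of_le_one {t : ℝ} (ht0 : 0 < t) (ht1 : t ≤ 1) {L a b : ℕ}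
    (hab : |(a : ℤ) - b| ≤ L) : |t ^ b - t ^ a| ≤ ((t ^ L)⁻¹ - 1) * t ^ a := by
  have htL : 0 < t ^ L := pow_pos ht0 L
  have htL1 : t ^ L ≤ 1 := pow_le_one₀ ht0.le ht1
  have hta : 0 < t ^ a := pow_pos ht0 a
  obtain ⟨h1, h2⟩ := abs_le.1 hab
  rw [abs_sub_le_iff]
  constructor
  · have hb : t ^ b * t ^ L ≤ t ^ a := by
      rw [← pow_add]; exact pow_le_pow_of_le_one ht0.le ht1 (by omega)
    have : t ^ b ≤ t ^ a / t ^ L := (le_div_iff₀ htL).2 hb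
    rw [sub_mul, one_mul, inv_mul_eq_div]
    linarith
  · have ha : t ^ a * t ^ L ≤ t ^ b := by
      rw [← pow_add]; exact pow_le_pow_of_le_one ht0.le ht1 (by omega)
    have hs : 1 - t ^ L ≤ (t ^ L)⁻¹ - 1 := by
      have : 1 ≤ (t ^ L)⁻¹ := (one_le_inv₀ htL).2 htL1
      nlinarith [mul_inv_cancel₀ htL.ne']
    nlinarith

lemma exists_pow_inv_sub_one_lt (L : ℕ) {η : ℝ} (hη : 0 < η) :
    ∃ δ : ℝ, 0 < δ ∧ δ < 1 / 2 ∧ ((1 - δ) ^ L)⁻¹ - 1 < η := by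
  have hlim : Tendsto (fun δ : ℝ => ((1 - δ) ^ L)⁻¹ - 1) (𝓝 0) (𝓝 0) := by
    have hcont : ContinuousAt (fun δ : ℝ => ((1 - δ) ^ L)⁻¹ - 1) 0 :=
      (((continuous_const.sub continuous_id).pow L).continuousAt.inv₀ (by simp)).sub
        continuousAt_const
    simpa using hcont.tendsto
  obtain ⟨δ, hδη, hδ⟩ := ((hlim.eventually (gt_mem_nhds hη)).filter_mono nhdsWithin_le_nhds |>.and
    (Ioo_mem_nhdsGT (by norm_num : (0 : ℝ) < 1 / 2))).exists
  exact ⟨δ, hδ.1, hδ.2, hδη⟩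

lemma rpow_one_div_le_mul_rpow_one_div_iff {A B a p : ℝ} (hA : 0 ≤ A) (hB : 0 ≤ B) (ha : 0 ≤ a)
    (hp : 0 < p) : A ^ (1 / p) ≤ a * B ^ (1 / p) ↔ A ≤ a ^ p * B := by
  have : a * B ^ (1 / p) = (a ^ p * B) ^ (1 / p) := by
    rw [Real.mul_rpow (Real.rpow_nonneg ha p) hB, ← Real.rpow_mul ha, mul_one_div_cancel hp.ne',
      Real.rpow_one]
  rw [this, Real.rpow_le_rpow_iff hA (by positivity) (by positivity)]

lemma norm_tsum_mul_weight_sub_le {S : Type*} {k f : S → ℂ} (hk : {y | k y ≠ 0}.Finite)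
    {w : S → ℝ} {lam : ℂ} {x : S} {c : ℝ} (heig : ∑' y, k y * f y = lam * f x)
    (hw : ∀ y, k y ≠ 0 → |w y - w x| ≤ c * w x) :
    ‖∑' y, k y * (f y * w y) - lam * (f x * w x)‖ ≤ c * w x * ∑' y, ‖k y‖ * ‖f y‖ := by
  have hout : ∀ y ∉ hk.toFinset, k y = 0 := fun y hy => by simpa using hy
  rw [← mul_assoc, ← heig, tsum_eq_sum (s := hk.toFinset) fun y hy => by simp [hout y hy],
    tsum_eq_sum (s := hk.toFinset) fun y hy => by simp [hout y hy],
    tsum_eq_sum (s := hk.toFinset) fun y hy => by simp [hout y hy], Finset.sum_mul,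
    ← Finset.sum_sub_distrib, Finset.mul_sum]
  refine (norm_sum_le _ _).trans (Finset.sum_le_sum fun y hy => ?_)
  calc ‖k y * (f y * w y) - k y * f y * w x‖ = ‖k y‖ * ‖f y‖ * |w y - w x| := by
        rw [show k y * (f y * w y) - k y * f y * w x = k y * f y * ((w y - w x : ℝ) : ℂ) by
          push_cast; ring]
        rw [norm_mul, norm_mul, Complex.norm_real, Real.norm_eq_abs]
    _ ≤ ‖k y‖ * ‖f y‖ * (c * w x) := by gcongr; exact hw y (by simpa using hy)
    _ = c * w x * (‖k y‖ * ‖f y‖) := by ring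

lemma tsum_norm_rpow_rpow_one_div_le {S E : Type*} [SeminormedAddCommGroup E] {e : S → E}
    {a : S → ℝ} {c p : ℝ} (hc : 0 ≤ c) (hp : 0 < p) (ha0 : ∀ x, 0 ≤ a x)
    (ha : Summable fun x => a x ^ p) (he : ∀ x, ‖e x‖ ≤ c * a x) :
    (∑' x, ‖e x‖ ^ p) ^ (1 / p) ≤ c * (∑' x, a x ^ p) ^ (1 / p) := by
  have hle : ∀ x, ‖e x‖ ^ p ≤ c ^ p * a x ^ p := fun x => by
    rw [← Real.mul_rpow hc (ha0 x)]
    exact Real.rpow_le_rpow (norm_nonneg _) (he x) hp.le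
  rw [rpow_one_div_le_mul_rpow_one_div_iff (by positivity) (tsum_nonneg fun x => by
    have := ha0 x; positivity) hc hp, ← tsum_mul_left]
  exact ((ha.mul_left _).of_nonneg_of_le (fun x => by positivity) hle).tsum_le_tsum hle
    (ha.mul_left _)

section AbsKernel

variable {S : Type*} {K : S → S → ℂ} {p : ℝ} {w : S → ℝ}

lemma summable_norm_rpow_column (hp : 0 < p)
    (hT : ∀ g : S → ℂ, (Summable fun x => ‖g x‖ ^ p) → Summable fun x => ‖∑' y, K x y * g y‖ ^ p)
    (y : S) : Summable fun x => ‖K x y‖ ^ p := by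
  classical
  have hsingle : Summable fun z => ‖(Pi.single y 1 : S → ℂ) z‖ ^ p :=
    summable_of_ne_finset_zero (s := {y}) fun z hz => by
      simp [Finset.mem_singleton.not.1 hz, Real.zero_rpow hp.ne']
  simpa [Pi.single_apply] using hT _ hsingle

lemma summable_weighted_absKernel_rpow {F : Finset S} {g : S → ℂ} (hg : ∀ y ∉ F, g y = 0)
    (hp : 0 < p) (hcol : ∀ y, Summable fun x => ‖K x y‖ ^ p) (hw0 : ∀ x, 0 ≤ w x)
    (hw1 : ∀ x, w x ≤ 1) : Summable fun x => ((∑' y, ‖K x y‖ * ‖g y‖) * w x) ^ p := by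
  have hq : (ENNReal.ofReal p).toReal = p := ENNReal.toReal_ofReal hp.le
  have hF : Memℓp (fun x => ∑ y ∈ F, ‖g y‖ * ‖K x y‖) (ENNReal.ofReal p) :=
    Memℓp.finsetSum F fun y _ => (memℓp_gen (by rw [hq]; exact hcol y)).norm.const_mul ‖g y‖
  have hTg : Memℓp (fun x => (∑' y, ‖K x y‖ * ‖g y‖) * w x) (ENNReal.ofReal p) := by
    refine hF.mono fun x => ?_
    rw [tsum_eq_sum (s := F) fun y hy => by simp [hg y hy]]
    have hsum0 : 0 ≤ ∑ y ∈ F, ‖K x y‖ * ‖g y‖ := by positivity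
    rw [norm_mul, Real.norm_of_nonneg hsum0, Real.norm_of_nonneg (hw0 x)]
    simp_rw [mul_comm ‖g _‖]
    exact mul_le_of_le_one_right hsum0 (hw1 x)
  have hTg0 : ∀ x, 0 ≤ ∑' y, ‖K x y‖ * ‖g y‖ := fun x => tsum_nonneg fun y => by positivity
  simpa [hq, Real.norm_eq_abs, abs_of_nonneg, hw0, hTg0] using hTg.summable (by rw [hq]; exact hp)

lemma summable_and_tsum_weighted_absKernel_rpow_le (hrow : ∀ x, {y | K x y ≠ 0}.Finite)
    (hp : 0 < p) (hcol : ∀ y, Summable fun x => ‖K x y‖ ^ p) (hw0 : ∀ x, 0 ≤ w x)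
    (hw1 : ∀ x, w x ≤ 1) {M : ℝ} (hM : 0 ≤ M)
    (hbound : ∀ g : S → ℂ, (∑' x, ((∑' y, ‖K x y‖ * ‖g y‖) * w x) ^ p) ^ (1 / p) ≤
      M * (∑' x, (‖g x‖ * w x) ^ p) ^ (1 / p))
    {f : S → ℂ} (hf : Summable fun x => (‖f x‖ * w x) ^ p) :
    (Summable fun x => ((∑' y, ‖K x y‖ * ‖f y‖) * w x) ^ p) ∧
      (∑' x, ((∑' y, ‖K x y‖ * ‖f y‖) * w x) ^ p) ^ (1 / p) ≤
        M * (∑' x, (‖f x‖ * w x) ^ p) ^ (1 / p) := by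
  classical
  have hnonneg : ∀ x, 0 ≤ ((∑' y, ‖K x y‖ * ‖f y‖) * w x) ^ p := fun x => by
    have := hw0 x; positivity
  suffices hfin : ∀ u : Finset S,
      ∑ x ∈ u, ((∑' y, ‖K x y‖ * ‖f y‖) * w x) ^ p ≤ M ^ p * ∑' x, (‖f x‖ * w x) ^ p from
    ⟨summable_of_sum_le hnonneg hfin, (rpow_one_div_le_mul_rpow_one_div_iff (tsum_nonneg hnonneg)
      (tsum_nonneg fun x => by have := hw0 x; positivity) hM hp).2
      ((summable_of_sum_le hnonneg hfin).tsum_le_of_sum_le hfin)⟩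
  -- `hbound` says nothing about `f` itself, whose left-hand side may not be summable;
  -- it is applied to the truncation of `f` to the rows meeting `u`.
  intro u
  set F := u.biUnion fun x => (hrow x).toFinset
  set fF := Set.indicator (↑F) f
  have hrowF : ∀ x ∈ u, ∑' y, ‖K x y‖ * ‖f y‖ = ∑' y, ‖K x y‖ * ‖fF y‖ := by
    refine fun x hx => tsum_congr fun y => ?_
    by_cases hK : K x y = 0
    · simp [hK]
    · have hyF : y ∈ F := Finset.mem_biUnion.2 ⟨x, hx, (hrow x).mem_toFinset.2 hK⟩
      simp [fF, hyF]
  have hfF_le : ∀ x, (‖fF x‖ * w x) ^ p ≤ (‖f x‖ * w x) ^ p := fun x => by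
    have := hw0 x
    gcongr
    exact norm_indicator_le_norm_self f x
  have hfF : Summable fun x => (‖fF x‖ * w x) ^ p :=
    hf.of_nonneg_of_le (fun x => by have := hw0 x; positivity) hfF_le
  calc ∑ x ∈ u, ((∑' y, ‖K x y‖ * ‖f y‖) * w x) ^ p
      = ∑ x ∈ u, ((∑' y, ‖K x y‖ * ‖fF y‖) * w x) ^ p :=
        Finset.sum_congr rfl fun x hx => by rw [hrowF x hx]
    _ ≤ ∑' x, ((∑' y, ‖K x y‖ * ‖fF y‖) * w x) ^ p :=
        (summable_weighted_absKernel_rpow (F := F) (fun y hy => by simp [fF, hy]) hp hcol hw0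
          hw1).sum_le_tsum u fun x _ => by have := hw0 x; positivity
    _ ≤ M ^ p * ∑' x, (‖fF x‖ * w x) ^ p := by
        refine (rpow_one_div_le_mul_rpow_one_div_iff ?_ ?_ hM hp).1 (hbound fF) <;>
          exact tsum_nonneg fun x => by have := hw0 x; positivity
    _ ≤ M ^ p * ∑' x, (‖f x‖ * w x) ^ p :=
        mul_le_mul_of_nonneg_left (hfF.tsum_le_tsum hfF_le hf) (by positivity)

lemma rpow_tsum_norm_apply_weight_sub_le (hrow : ∀ x, {y | K x y ≠ 0}.Finite) (hp : 0 < p)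
    (hcol : ∀ y, Summable fun x => ‖K x y‖ ^ p) (hw0 : ∀ x, 0 ≤ w x) (hw1 : ∀ x, w x ≤ 1)
    {M : ℝ} (hM : 0 ≤ M)
    (hbound : ∀ g : S → ℂ, (∑' x, ((∑' y, ‖K x y‖ * ‖g y‖) * w x) ^ p) ^ (1 / p) ≤
      M * (∑' x, (‖g x‖ * w x) ^ p) ^ (1 / p))
    {c : ℝ} (hc : 0 ≤ c) (hw : ∀ x y, K x y ≠ 0 → |w y - w x| ≤ c * w x)
    {f : S → ℂ} {lam : ℂ} (heig : ∀ x, ∑' y, K x y * f y = lam * f x)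
    (hf : Summable fun x => (‖f x‖ * w x) ^ p) :
    (∑' x, ‖∑' y, K x y * (f y * w y) - lam * (f x * w x)‖ ^ p) ^ (1 / p) ≤
      c * M * (∑' x, (‖f x‖ * w x) ^ p) ^ (1 / p) := by
  obtain ⟨hTf, hTf_le⟩ :=
    summable_and_tsum_weighted_absKernel_rpow_le hrow hp hcol hw0 hw1 hM hbound hf
  have herr : ∀ x, ‖∑' y, K x y * (f y * w y) - lam * (f x * w x)‖ ≤
      c * ((∑' y, ‖K x y‖ * ‖f y‖) * w x) := fun x =>
    (norm_tsum_mul_weight_sub_le (hrow x) (heig x) (hw x)).trans_eq (by ring)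
  calc _ ≤ c * (∑' x, ((∑' y, ‖K x y‖ * ‖f y‖) * w x) ^ p) ^ (1 / p) :=
        tsum_norm_rpow_rpow_one_div_le hc hp
          (fun x => mul_nonneg (tsum_nonneg fun y => by positivity) (hw0 x)) hTf herr
    _ ≤ c * M * (∑' x, (‖f x‖ * w x) ^ p) ^ (1 / p) := by
        rw [mul_assoc]; exact mul_le_mul_of_nonneg_left hTf_le hc

end AbsKernel

theorem stmt13_general {S : Type*} (ℓ : S → ℕ)
    (p : ℝ) (hp : 1 ≤ p) (L : ℕ) (K : S → S → ℂ)
    (hrow : ∀ x : S, {y : S | K x y ≠ 0}.Finite)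
    (hprop : ∀ x y : S, (L : ℤ) < |(ℓ x : ℤ) - (ℓ y : ℤ)| → K x y = 0)
    (M : ℝ) (hM : 0 < M)
    (hbound : ∀ (g : S → ℂ) (δ : ℝ), 0 < δ → δ < 1 / 2 →
      (∑' x : S, ((∑' y : S, ‖K x y‖ * ‖g y‖) * (1 - δ) ^ ℓ x) ^ p) ^ (1 / p) ≤
        M * (∑' x : S, (‖g x‖ * (1 - δ) ^ ℓ x) ^ p) ^ (1 / p))
    (B : ℝ)
    (hT : ∀ g : S → ℂ, (Summable fun x : S => ‖g x‖ ^ p) →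
      (Summable fun x : S => ‖∑' y : S, K x y * g y‖ ^ p) ∧
        (∑' x : S, ‖∑' y : S, K x y * g y‖ ^ p) ^ (1 / p) ≤
          B * (∑' x : S, ‖g x‖ ^ p) ^ (1 / p))
    (f : S → ℂ) (hf0 : f ≠ 0)
    (hftemp : ∀ δ : ℝ, 0 < δ → δ < 1 →
      Summable fun x : S => (‖f x‖ * (1 - δ) ^ ℓ x) ^ p)
    (lam : ℂ) (heig : ∀ x : S, ∑' y : S, K x y * f y = lam * f x) :
    ∀ ε : ℝ, 0 < ε → ∃ g : S → ℂ, g ≠ 0 ∧ (Summable fun x : S => ‖g x‖ ^ p) ∧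
      (∑' x : S, ‖(∑' y : S, K x y * g y) - lam * g x‖ ^ p) ^ (1 / p) ≤
        ε * (∑' x : S, ‖g x‖ ^ p) ^ (1 / p) := by
  intro ε hε
  have hp0 : 0 < p := by linarith
  obtain ⟨δ, hδ0, hδ2, hcε⟩ := exists_pow_inv_sub_one_lt L (div_pos hε hM)
  set c := ((1 - δ) ^ L)⁻¹ - 1
  set w : S → ℝ := fun x => (1 - δ) ^ ℓ x
  have ht0 : 0 < 1 - δ := by linarith
  have ht1 : 1 - δ ≤ 1 := by linarith
  have hw_pos : ∀ x, 0 < w x := fun x => pow_pos ht0 _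
  have hw0 : ∀ x, 0 ≤ w x := fun x => (hw_pos x).le
  have hc0 : 0 ≤ c := sub_nonneg.2 <| (one_le_inv₀ (by positivity)).2 (pow_le_one₀ ht0.le ht1)
  have hw : ∀ x y, K x y ≠ 0 → |w y - w x| ≤ c * w x := fun x y hK =>
    abs_pow_sub_pow_le_of_le_one ht0 ht1 (not_lt.1 (mt (hprop x y) hK))
  have hgnorm : ∀ x, ‖f x * (w x : ℂ)‖ = ‖f x‖ * w x := fun x => by
    rw [norm_mul, Complex.norm_real, Real.norm_of_nonneg (hw0 x)]
  refine ⟨fun x => f x * (w x : ℂ), ?_, by simpa only [hgnorm] using hftemp δ hδ0 (by linarith), ?_⟩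
  · exact fun hg => hf0 <| funext fun x => by
      simpa only [hgnorm, Pi.zero_apply, norm_zero, mul_eq_zero, norm_eq_zero, (hw_pos x).ne',
        or_false] using congrArg norm (congrFun hg x)
  simp only [hgnorm]
  refine (rpow_tsum_norm_apply_weight_sub_le hrow hp0
    (summable_norm_rpow_column hp0 fun g hg => (hT g hg).1) hw0 (fun x => pow_le_one₀ ht0.le ht1)
    hM.le (fun g => hbound g δ hδ0 hδ2) hc0 hw heig (hftemp δ hδ0 (by linarith))).trans ?_
  gcongr
  exact ((lt_div_iff₀ hM).1 hcε).le

/-- A `p`-tempered eigenfunction of a row-finite bounded-propagation kernel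
operator, bounded on the `δ`-weighted spaces and on `ℓ^p`, forces its eigenvalue
into the approximate point spectrum of the operator on `ℓ^p`. -/
theorem stmt13 {S : Type*} [Countable S] (ℓ : S → ℕ)
    (p : ℝ) (hp : 1 ≤ p) (L : ℕ) (K : S → S → ℂ)
    (hrow : ∀ x : S, {y : S | K x y ≠ 0}.Finite)
    (hprop : ∀ x y : S, (L : ℤ) < |(ℓ x : ℤ) - (ℓ y : ℤ)| → K x y = 0)
    (M : ℝ) (hM : 0 < M)
    (hbound : ∀ (g : S → ℂ) (δ : ℝ), 0 < δ → δ < 1 / 2 →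
      (∑' x : S, ((∑' y : S, ‖K x y‖ * ‖g y‖) * (1 - δ) ^ ℓ x) ^ p) ^ (1 / p) ≤
        M * (∑' x : S, (‖g x‖ * (1 - δ) ^ ℓ x) ^ p) ^ (1 / p))
    (B : ℝ)
    (hT : ∀ g : S → ℂ, (Summable fun x : S => ‖g x‖ ^ p) →
      (Summable fun x : S => ‖∑' y : S, K x y * g y‖ ^ p) ∧
        (∑' x : S, ‖∑' y : S, K x y * g y‖ ^ p) ^ (1 / p) ≤
          B * (∑' x : S, ‖g x‖ ^ p) ^ (1 / p))
    (f : S → ℂ) (hf0 : f ≠ 0)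
    (hftemp : ∀ δ : ℝ, 0 < δ → δ < 1 →
      Summable fun x : S => (‖f x‖ * (1 - δ) ^ ℓ x) ^ p)
    (lam : ℂ) (heig : ∀ x : S, ∑' y : S, K x y * f y = lam * f x) :
    ∀ ε : ℝ, 0 < ε → ∃ g : S → ℂ, g ≠ 0 ∧ (Summable fun x : S => ‖g x‖ ^ p) ∧
      (∑' x : S, ‖(∑' y : S, K x y * g y) - lam * g x‖ ^ p) ^ (1 / p) ≤
        ε * (∑' x : S, ‖g x‖ ^ p) ^ (1 / p) :=
  stmt13_general ℓ p hp L K hrow hprop M hM hbound B hT f hf0 hftemp lam heig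
end
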